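/- arXiv:2408.08081 — 2 statements merged into one kernel-verified Lean document; each statement's English description precedes it below -/
import Mathlib

section
/- Let n ≥ 1 and let G be a group of invertible affine transformations of ℝⁿ such that (i) the set of vectors v for which the translation x ↦ x + v belongs to G is dense in ℝⁿ, and (ii) G contains an element whose linear part has operator norm strictly less than 1. Then for any two nonempty polytopes P and Q in ℝⁿ there are finitely many polytopes P₁, …, P_k whose union is P and whose pairwise intersections are Lebesgue-null, together with elements g₁, …, g_k ∈ G, such that gᵢ(Pᵢ) ⊆ Q for each i, gᵢ(Pᵢ) ∩ gⱼ(Pⱼ) is Lebesgue-null for all i ≠ j, and vol(⋃ᵢ gᵢ(Pᵢ)) < vol(Q) (so the complement in Q of the embedded copy of P has positive Lebesgue measure). -/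
/-!
One piece suffices. A large power of the contracting element shrinks the bounded set `P` into a
ball of radius `r / 4`, and a translation from the dense set moves that ball into the ball of
radius `r / 2` concentric with a ball `B(q, r) ⊆ Q` (which exists because a simplex spans `ℝⁿ`).
Since `n ≥ 1`, the half ball has strictly smaller volume than `B(q, r)`.
-/

open MeasureTheory

/-- A polytope in `ℝⁿ`: a finite union of `n`-simplices, where an `n`-simplex is the convex
hull of `n + 1` affinely independent points. -/
def IsEuclideanPolytope (n : ℕ) (P : Set (EuclideanSpace ℝ (Fin n))) : Prop :=
  ∃ (k : ℕ) (v : Fin k → Fin (n + 1) → EuclideanSpace ℝ (Fin n)),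
    (∀ i, AffineIndependent ℝ (v i)) ∧ P = ⋃ i, convexHull ℝ (Set.range (v i))

open Metric Filter Topology

namespace IsEuclideanPolytope

variable {n : ℕ} {P : Set (EuclideanSpace ℝ (Fin n))}

theorem isBounded (hP : IsEuclideanPolytope n P) : Bornology.IsBounded P := by
  obtain ⟨k, v, -, rfl⟩ := hP
  exact Bornology.isBounded_iUnion.2 fun i => isBounded_convexHull.2 (Set.finite_range _).isBounded

theorem exists_ball_subset (hP : IsEuclideanPolytope n P) (hPne : P.Nonempty) :
    ∃ q r, 0 < r ∧ ball q r ⊆ P := by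
  obtain ⟨k, v, hindep, rfl⟩ := hP
  obtain ⟨i, -⟩ := Set.mem_iUnion.1 hPne.some_mem
  have hspan : affineSpan ℝ (convexHull ℝ (Set.range (v i))) = ⊤ := by
    rw [affineSpan_convexHull, (hindep i).affineSpan_eq_top_iff_card_eq_finrank_add_one]
    simp
  obtain ⟨q, hq⟩ := (convex_convexHull ℝ _).interior_nonempty_iff_affineSpan_eq_top.2 hspan
  obtain ⟨r, hr, hball⟩ := isOpen_iff.1 isOpen_interior q hq
  exact ⟨q, r, hr,
    hball.trans (interior_subset.trans (Set.subset_iUnion_of_subset i subset_rfl))⟩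

end IsEuclideanPolytope

section

variable {E : Type*} [NormedAddCommGroup E] [NormedSpace ℝ E]

theorem MeasureTheory.Measure.addHaar_ball_lt_addHaar_ball [FiniteDimensional ℝ E]
    [Nontrivial E] [MeasurableSpace E] [BorelSpace E] (μ : Measure E) [μ.IsAddHaarMeasure]
    (x : E) {r s : ℝ} (hr : 0 ≤ r) (hrs : r < s) : μ (ball x r) < μ (ball x s) := by
  rw [μ.addHaar_ball x hr, μ.addHaar_ball x (hr.trans hrs.le)]
  refine ENNReal.mul_lt_mul_left (measure_ball_pos μ 0 one_pos).ne' measure_ball_lt_top.ne ?_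
  exact ENNReal.ofReal_lt_ofReal_iff_of_nonneg (by positivity) |>.2
    (pow_lt_pow_left₀ hrs hr Module.finrank_pos.ne')

theorem AffineEquiv.lipschitzWith_nnnorm_linear [FiniteDimensional ℝ E] (f : E ≃ᵃ[ℝ] E) :
    LipschitzWith ‖LinearMap.toContinuousLinearMap (f.linear : E →ₗ[ℝ] E)‖₊ f := by
  refine LipschitzWith.of_dist_le_mul fun x y => ?_
  rw [dist_eq_norm_vsub, dist_eq_norm_vsub]
  exact (f.toAffineMap.linearMap_vsub x y).symm ▸
    (LinearMap.toContinuousLinearMap (f.linear : E →ₗ[ℝ] E)).le_opNorm _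

theorem AffineEquiv.lipschitzWith_pow {f : E ≃ᵃ[ℝ] E} {K : NNReal} (hf : LipschitzWith K f) :
    ∀ m : ℕ, LipschitzWith (K ^ m) ⇑(f ^ m)
  | 0 => by simpa [AffineEquiv.coe_one] using LipschitzWith.id
  | m + 1 => by
    rw [pow_succ, pow_succ, AffineEquiv.coe_mul]
    exact (lipschitzWith_pow hf m).comp hf

theorem AffineEquiv.exists_pow_image_subset_ball [FiniteDimensional ℝ E] {f : E ≃ᵃ[ℝ] E}
    (hf : ‖LinearMap.toContinuousLinearMap (f.linear : E →ₗ[ℝ] E)‖ < 1) {S : Set E}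
    (hS : Bornology.IsBounded S) {ε : ℝ} (hε : 0 < ε) :
    ∃ m : ℕ, ⇑(f ^ m) '' S ⊆ ball ((f ^ m) 0) ε := by
  set K := ‖LinearMap.toContinuousLinearMap (f.linear : E →ₗ[ℝ] E)‖₊
  obtain ⟨R, hR⟩ := hS.subset_closedBall 0
  have hlim : Tendsto (fun m : ℕ => (K : ℝ) ^ m * R) atTop (𝓝 0) := by
    simpa using (tendsto_pow_atTop_nhds_zero_of_lt_one K.coe_nonneg hf).mul_const R
  obtain ⟨m, hm⟩ := (hlim.eventually (gt_mem_nhds hε)).exists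
  refine ⟨m, ?_⟩
  rintro _ ⟨x, hx, rfl⟩
  calc dist ((f ^ m) x) ((f ^ m) 0)
      ≤ (K : ℝ) ^ m * dist x 0 := by
        exact_mod_cast
          (AffineEquiv.lipschitzWith_pow f.lipschitzWith_nnnorm_linear m).dist_le_mul x 0
    _ ≤ (K : ℝ) ^ m * R := by gcongr; exact mem_closedBall.1 (hR hx)
    _ < ε := hm

theorem Subgroup.exists_mem_image_subset_ball [FiniteDimensional ℝ E]
    (G : Subgroup (E ≃ᵃ[ℝ] E)) (hdense : Dense {v : E | AffineEquiv.constVAdd ℝ E v ∈ G})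
    (hshrink : ∃ g ∈ G,
      ‖LinearMap.toContinuousLinearMap ((g : E ≃ᵃ[ℝ] E).linear : E →ₗ[ℝ] E)‖ < 1)
    {S : Set E} (hS : Bornology.IsBounded S) (q : E) {ε : ℝ} (hε : 0 < ε) :
    ∃ g ∈ G, ⇑g '' S ⊆ ball q ε := by
  obtain ⟨f, hfG, hf⟩ := hshrink
  obtain ⟨m, hm⟩ := f.exists_pow_image_subset_ball hf hS (half_pos hε)
  obtain ⟨v, hv, hvG⟩ := dense_iff.1 hdense (q - (f ^ m) 0) (ε / 2) (half_pos hε)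
  refine ⟨AffineEquiv.constVAdd ℝ E v * f ^ m, mul_mem hvG (pow_mem hfG m), ?_⟩
  rintro _ ⟨x, hx, rfl⟩
  have hfx := mem_ball.1 (hm ⟨x, hx, rfl⟩)
  have hvq : dist (v + (f ^ m) 0) q < ε / 2 := by
    rw [dist_eq_norm, ← sub_sub_eq_add_sub, ← dist_eq_norm]; exact mem_ball.1 hv
  simp only [AffineEquiv.coe_mul, Function.comp_apply, AffineEquiv.constVAdd_apply, vadd_eq_add,
    mem_ball]
  calc dist (v + (f ^ m) x) q
      ≤ dist (v + (f ^ m) x) (v + (f ^ m) 0) + dist (v + (f ^ m) 0) q := dist_triangle _ _ _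
    _ < ε / 2 + ε / 2 := by rw [dist_add_left]; exact add_lt_add hfx hvq
    _ = ε := add_halves ε

end

theorem squeezing_scissors_embedding_general (n : ℕ) (hn : 1 ≤ n)
    (G : Subgroup (EuclideanSpace ℝ (Fin n) ≃ᵃ[ℝ] EuclideanSpace ℝ (Fin n)))
    (hdense : Dense {v : EuclideanSpace ℝ (Fin n) |
      AffineEquiv.constVAdd ℝ (EuclideanSpace ℝ (Fin n)) v ∈ G})
    (hshrink : ∃ g ∈ G,
      ‖LinearMap.toContinuousLinearMap
        ((g : EuclideanSpace ℝ (Fin n) ≃ᵃ[ℝ] EuclideanSpace ℝ (Fin n)).linear :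
          EuclideanSpace ℝ (Fin n) →ₗ[ℝ] EuclideanSpace ℝ (Fin n))‖ < 1)
    (P Q : Set (EuclideanSpace ℝ (Fin n)))
    (hP : IsEuclideanPolytope n P) (hQ : IsEuclideanPolytope n Q)
    (hQne : Q.Nonempty) :
    ∃ (k : ℕ) (Ps : Fin k → Set (EuclideanSpace ℝ (Fin n)))
      (g : Fin k → (EuclideanSpace ℝ (Fin n) ≃ᵃ[ℝ] EuclideanSpace ℝ (Fin n))),
      (∀ i, g i ∈ G) ∧
      (∀ i, IsEuclideanPolytope n (Ps i)) ∧
      (⋃ i, Ps i) = P ∧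
      (∀ i j, i ≠ j → volume (Ps i ∩ Ps j) = 0) ∧
      (∀ i, (g i) '' (Ps i) ⊆ Q) ∧
      (∀ i j, i ≠ j → volume ((g i) '' (Ps i) ∩ (g j) '' (Ps j)) = 0) ∧
      volume (⋃ i, (g i) '' (Ps i)) < volume Q := by
  have : NeZero n := ⟨by omega⟩
  obtain ⟨q, r, hr, hballQ⟩ := hQ.exists_ball_subset hQne
  obtain ⟨g, hgG, hgP⟩ :=
    G.exists_mem_image_subset_ball hdense hshrink hP.isBounded q (half_pos hr)
  have hvol : volume (g '' P) < volume Q :=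
    calc volume (g '' P) ≤ volume (ball q (r / 2)) := measure_mono hgP
      _ < volume (ball q r) :=
        volume.addHaar_ball_lt_addHaar_ball q (half_pos hr).le (half_lt_self hr)
      _ ≤ volume Q := measure_mono hballQ
  refine ⟨1, fun _ => P, fun _ => g, fun _ => hgG, fun _ => hP, Set.iUnion_const P,
    fun i j hij => (hij (Subsingleton.elim i j)).elim,
    fun _ => hgP.trans ((ball_subset_ball (half_le_self hr.le)).trans hballQ),
    fun i j hij => (hij (Subsingleton.elim i j)).elim, ?_⟩
  rwa [Set.iUnion_const]

/-- Let `G` be a group of invertible affine transformations of `ℝⁿ` such that the set of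
translation vectors of translations in `G` is dense, and such that `G` contains an element
whose linear part has operator norm `< 1`.  Then any nonempty polytope `P` admits a scissors
embedding into any nonempty polytope `Q` whose image has measure strictly smaller than that
of `Q`. -/
theorem squeezing_scissors_embedding (n : ℕ) (hn : 1 ≤ n)
    (G : Subgroup (EuclideanSpace ℝ (Fin n) ≃ᵃ[ℝ] EuclideanSpace ℝ (Fin n)))
    (hdense : Dense {v : EuclideanSpace ℝ (Fin n) |
      AffineEquiv.constVAdd ℝ (EuclideanSpace ℝ (Fin n)) v ∈ G})
    (hshrink : ∃ g ∈ G,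
      ‖LinearMap.toContinuousLinearMap
        ((g : EuclideanSpace ℝ (Fin n) ≃ᵃ[ℝ] EuclideanSpace ℝ (Fin n)).linear :
          EuclideanSpace ℝ (Fin n) →ₗ[ℝ] EuclideanSpace ℝ (Fin n))‖ < 1)
    (P Q : Set (EuclideanSpace ℝ (Fin n)))
    (hP : IsEuclideanPolytope n P) (hQ : IsEuclideanPolytope n Q)
    (hPne : P.Nonempty) (hQne : Q.Nonempty) :
    ∃ (k : ℕ) (Ps : Fin k → Set (EuclideanSpace ℝ (Fin n)))
      (g : Fin k → (EuclideanSpace ℝ (Fin n) ≃ᵃ[ℝ] EuclideanSpace ℝ (Fin n))),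
      (∀ i, g i ∈ G) ∧
      (∀ i, IsEuclideanPolytope n (Ps i)) ∧
      (⋃ i, Ps i) = P ∧
      (∀ i j, i ≠ j → volume (Ps i ∩ Ps j) = 0) ∧
      (∀ i, (g i) '' (Ps i) ⊆ Q) ∧
      (∀ i j, i ≠ j → volume ((g i) '' (Ps i) ∩ (g j) '' (Ps j)) = 0) ∧
      volume (⋃ i, (g i) '' (Ps i)) < volume Q :=
  squeezing_scissors_embedding_general n hn G hdense hshrink P Q hP hQ hQne
end

section
/- If A is a torsion-free abelian group, then for every j ≥ 0 the j-th exterior power Λʲ_ℤ A of A as a ℤ-module is also torsion-free. -/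
/-!
Every element of `⋀[ℤ]^j A` comes from `⋀[ℤ]^j P` for a finitely generated, hence free, subgroup
`P ≤ A`, and `⋀[ℤ]^j P` is free, hence torsion-free. So it suffices that `⋀[ℤ]^j P → ⋀[ℤ]^j A` is
injective. The coordinate forms of a basis of `P` extend to `ℚ`-valued forms on `A` because `ℚ` is
an injective `ℤ`-module, and the determinants of these extensions recover the coordinates of
`⋀[ℤ]^j P` in the basis of ordered wedges.
-/

open Module Set.powersetCard

namespace exteriorPower

variable {n : ℕ}

section detForm

variable {R S N : Type*} [CommRing R] [CommRing S] [Algebra R S] [AddCommGroup N] [Module R N]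

noncomputable def detForm (g : Fin n → N →ₗ[R] S) : ⋀[R]^n N →ₗ[R] S :=
  alternatingMapLinearEquiv
    { toMultilinearMap :=
        (Matrix.detRowAlternating.toMultilinearMap.restrictScalars R).compLinearMap
          fun _ => LinearMap.pi g
      map_eq_zero_of_eq' := fun v i k h hik =>
        Matrix.detRowAlternating.map_eq_zero_of_eq (fun l => LinearMap.pi g (v l))
          (by simp only [h]) hik }

@[simp]
lemma detForm_ιMulti (g : Fin n → N →ₗ[R] S) (v : Fin n → N) :
    detForm g (ιMulti R n v) = (Matrix.of fun i k => g k (v i)).det := by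
  rw [detForm, alternatingMapLinearEquiv_apply_ιMulti]
  rfl

variable {M : Type*} [AddCommGroup M] [Module R M] {I : Type*} [LinearOrder I]

lemma detForm_comp_map_eq_ιMultiDual (f : M →ₗ[R] N) (b : Basis I R M) (g : I → N →ₗ[R] S)
    (hg : ∀ i, g i ∘ₗ f = Algebra.linearMap R S ∘ₗ b.coord i) (s : Set.powersetCard I n) :
    detForm (g ∘ ofFinEmbEquiv.symm s) ∘ₗ map n f
      = Algebra.linearMap R S ∘ₗ ιMultiDual R n b s := by
  refine linearMap_ext (AlternatingMap.ext fun v => ?_)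
  simp only [LinearMap.compAlternatingMap_apply, LinearMap.comp_apply, map_apply_ιMulti,
    detForm_ιMulti, ιMultiDual_apply_ιMulti, Algebra.linearMap_apply, RingHom.map_det]
  congr 1
  ext i k
  exact LinearMap.congr_fun (hg _) (v i)

theorem map_injective_of_coord_extend (hS : Function.Injective (algebraMap R S))
    (f : M →ₗ[R] N) (b : Basis I R M) (g : I → N →ₗ[R] S)
    (hg : ∀ i, g i ∘ₗ f = Algebra.linearMap R S ∘ₗ b.coord i) :
    Function.Injective (map n f) := by
  refine (injective_iff_map_eq_zero _).2 fun y hy => (b.exteriorPower n).ext_elem fun s => ?_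
  apply hS
  rw [basis_repr_apply, map_zero, Finsupp.zero_apply, map_zero, ← Algebra.linearMap_apply,
    ← LinearMap.comp_apply, ← detForm_comp_map_eq_ιMultiDual f b g hg, LinearMap.comp_apply, hy,
    map_zero]

end detForm

variable {A B : Type*} [AddCommGroup A] [AddCommGroup B]

theorem map_injective_int_of_free [Module.Free ℤ A] {f : A →ₗ[ℤ] B}
    (hf : Function.Injective f) : Function.Injective (map n f) := by
  classical
  obtain ⟨I, b⟩ := Module.Free.exists_basis ℤ A
  let : LinearOrder I := linearOrderOfSTO WellOrderingRel
  have hext (i : I) : ∃ g : B →ₗ[ℤ] ℚ, g ∘ₗ f = Algebra.linearMap ℤ ℚ ∘ₗ b.coord i :=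
    (Module.Baer.of_divisible ℚ).extension_property f hf _
  choose g hg using hext
  exact map_injective_of_coord_extend Int.cast_injective f b g hg

variable {R M : Type*} [CommRing R] [AddCommGroup M] [Module R M]

lemma range_map_subtype_mono {P Q : Submodule R M} (hPQ : P ≤ Q) :
    LinearMap.range (map n P.subtype) ≤ LinearMap.range (map n Q.subtype) := by
  rw [← Submodule.subtype_comp_inclusion P Q hPQ, map_comp]
  exact LinearMap.range_comp_le_range _ _

theorem exists_fg_mem_range_map_subtype (x : ⋀[R]^n M) :
    ∃ P : Submodule R M, P.FG ∧ x ∈ LinearMap.range (map n P.subtype) := by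
  have hx : x ∈ Submodule.span R (Set.range (ιMulti R n)) := by
    rw [ιMulti_span]; trivial
  induction hx using Submodule.span_induction with
  | mem _ hv =>
    obtain ⟨v, rfl⟩ := hv
    refine ⟨Submodule.span R (Set.range v), Submodule.fg_span (Set.finite_range v),
      ιMulti R n fun i => ⟨v i, Submodule.subset_span ⟨i, rfl⟩⟩, ?_⟩
    rw [map_apply_ιMulti]
    rfl
  | zero => exact ⟨⊥, Submodule.fg_bot, Submodule.zero_mem _⟩
  | add x y _ _ hx hy =>
    obtain ⟨P, hP, hxP⟩ := hx
    obtain ⟨Q, hQ, hyQ⟩ := hy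
    exact ⟨P ⊔ Q, hP.sup hQ, Submodule.add_mem _ (range_map_subtype_mono le_sup_left hxP)
      (range_map_subtype_mono le_sup_right hyQ)⟩
  | smul r x _ hx =>
    obtain ⟨P, hP, hxP⟩ := hx
    exact ⟨P, hP, Submodule.smul_mem _ r hxP⟩

instance isTorsionFree_int [IsTorsionFree ℤ A] : IsTorsionFree ℤ (⋀[ℤ]^n A) := by
  refine .of_smul_eq_zero fun r x hrx => or_iff_not_imp_left.2 fun hr => ?_
  obtain ⟨P, hP, y, rfl⟩ := exists_fg_mem_range_map_subtype x
  have : Module.Finite ℤ P := Module.Finite.iff_fg.2 hP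
  have hry : r • y = 0 :=
    map_injective_int_of_free P.injective_subtype (by rwa [map_smul, map_zero])
  rw [(smul_eq_zero_iff_right hr).1 hry, map_zero]

end exteriorPower

/-- If `A` is a torsion-free abelian group, then for every `j ≥ 0` the `j`-th exterior power
`Λʲ_ℤ A` of `A` as a `ℤ`-module is also torsion-free. -/
theorem exteriorPower_torsionFree (A : Type) [AddCommGroup A]
    (hA : ∀ (m : ℤ) (x : A), m ≠ 0 → m • x = 0 → x = 0) (j : ℕ) :
    ∀ (m : ℤ) (x : ⋀[ℤ]^j A), m ≠ 0 → m • x = 0 → x = 0 := by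
  have : IsTorsionFree ℤ A :=
    .of_smul_eq_zero fun m x hmx => or_iff_not_imp_left.2 fun hm => hA m x hm hmx
  exact fun m x hm => (smul_eq_zero_iff_right hm).1
end
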